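/- Let V be a vector space of dimension at least 3 over the finite field F_q (q odd) with a nondegenerate symmetric bilinear form, let l be a nondegenerate 2-dimensional subspace and ⟨a⟩ a nondegenerate 1-dimensional subspace not contained in l with ⟨a⟩ + l 3-dimensional. Then at least q − 3 of the nondegenerate 1-dimensional subspaces of l span a nondegenerate 2-dimensional subspace together with ⟨a⟩. -/

import Mathlib

/-!
A nonzero symmetric bilinear form on a plane, in characteristic `≠ 2`, has at most two isotropic
points: if `⟨u₁⟩, ⟨u₂⟩, ⟨u₃⟩` are distinct and isotropic, then `u₃ = s u₁ + t u₂` with `s t ≠ 0`,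
and `0 = C(u₃, u₃) = s t (C(u₁, u₂) + C(u₂, u₁))` forces `C(w, w) = 0` on the whole plane.

A point `⟨u⟩` of `l` is nondegenerate iff `B(u, u) ≠ 0`, and `⟨a⟩ + ⟨u⟩` is nondegenerate iff
the Gram determinant `B(a, a) B(u, u) - B(a, u)²` is nonzero. Both are diagonals of symmetric forms
that do not vanish on `l`: the second one because some `u ≠ 0` in `l` is orthogonal to `a`, and
`B(u, ·)` is nonzero on `l`. So at most `2 + 2` of the `q + 1` points of `l` are bad.
-/

open Module
open LinearMap (BilinForm)
open scoped LinearAlgebra.Projectivization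

section

variable {F V : Type*} [Field F] [AddCommGroup V] [Module F V]

lemma FiniteField.two_ne_zero_of_odd_card [Fintype F] (hodd : Odd (Fintype.card F)) :
    (2 : F) ≠ 0 :=
  Ring.two_ne_zero fun hchar => by
    have := FiniteField.even_card_iff_char_two.mp hchar
    rw [Nat.odd_iff] at hodd
    omega

lemma Projectivization.span_rep_injective (W : Submodule F V) :
    Function.Injective fun p : ℙ F W => F ∙ (p.rep : V) := by
  intro p p' h
  apply Projectivization.submodule_injective
  rw [p.submodule_eq, p'.submodule_eq]
  apply Submodule.map_injective_of_injective W.injective_subtype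
  simpa [Submodule.map_span, Set.image_singleton] using h

lemma Submodule.finite_Iic (W : Submodule F V) [Finite W] : (Set.Iic W).Finite :=
  ((Set.toFinite (W : Set V)).powerset.preimage SetLike.coe_injective.injOn).subset
    fun _ hP => SetLike.coe_subset_coe.mpr hP

lemma Submodule.linearIndependent_pair_of_notMem_of_mem {W : Submodule F V} {a u : V}
    (ha : a ∉ W) (hu : u ∈ W) (hu0 : u ≠ 0) : LinearIndependent F ![a, u] :=
  linearIndependent_fin2.mpr ⟨hu0, fun c hc => ha <| by
    simp only [Matrix.cons_val_one, Matrix.cons_val_zero] at hc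
    exact hc ▸ W.smul_mem c hu⟩

lemma LinearIndependent.finrank_span_singleton_sup_span_singleton {a u : V}
    (hau : LinearIndependent F ![a, u]) : finrank F (F ∙ a ⊔ F ∙ u : Submodule F V) = 2 := by
  have := finrank_span_eq_card hau
  rwa [Matrix.range_cons_cons_empty, Submodule.span_insert, Fintype.card_fin] at this

namespace LinearMap.BilinForm

lemma apply_smul_add_smul_self (C : BilinForm F V) (s t : F) (u v : V) :
    C (s • u + t • v) (s • u + t • v) =
      s ^ 2 * C u u + s * t * (C u v + C v u) + t ^ 2 * C v v := by
  simp only [map_add, map_smul, LinearMap.add_apply, LinearMap.smul_apply, smul_eq_mul]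
  ring

section Plane

variable {W : Type*} [AddCommGroup W] [Module F W]

lemma self_eq_zero_of_three_isotropic_points (hW : finrank F W = 2) (C : BilinForm F W)
    {p₁ p₂ p₃ : ℙ F W} (h₁₂ : p₁ ≠ p₂) (h₁₃ : p₁ ≠ p₃) (h₂₃ : p₂ ≠ p₃)
    (hp₁ : C p₁.rep p₁.rep = 0) (hp₂ : C p₂.rep p₂.rep = 0) (hp₃ : C p₃.rep p₃.rep = 0)
    (w : W) : C w w = 0 := by
  have hspan : ∀ w : W, ∃ s t : F, s • p₁.rep + t • p₂.rep = w := by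
    intro w
    have htop := (Projectivization.linearIndependent_pair_iff_ne.mpr h₁₂)
      |>.span_eq_top_of_card_eq_finrank (by simp [hW])
    rw [Matrix.range_cons_cons_empty] at htop
    exact Submodule.mem_span_pair.mp (htop ▸ Submodule.mem_top)
  obtain ⟨s, t, hst⟩ := hspan p₃.rep
  have hs : s ≠ 0 := by
    rintro rfl
    have := LinearIndependent.pair_iff.mp
      (Projectivization.linearIndependent_pair_iff_ne.mpr h₂₃) t (-1) (by rw [← hst]; simp)
    exact one_ne_zero (neg_eq_zero.mp this.2)
  have ht : t ≠ 0 := by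
    rintro rfl
    have := LinearIndependent.pair_iff.mp
      (Projectivization.linearIndependent_pair_iff_ne.mpr h₁₃) s (-1) (by rw [← hst]; simp)
    exact one_ne_zero (neg_eq_zero.mp this.2)
  have hpolar : C p₁.rep p₂.rep + C p₂.rep p₁.rep = 0 := by
    have := C.apply_smul_add_smul_self s t p₁.rep p₂.rep
    rw [hst, hp₁, hp₂, hp₃] at this
    simpa [hs, ht] using this
  obtain ⟨s, t, rfl⟩ := hspan w
  rw [C.apply_smul_add_smul_self, hp₁, hp₂, hpolar]
  ring

lemma ncard_isotropic_points_le_two (hW : finrank F W = 2) (h2 : (2 : F) ≠ 0)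
    (C : BilinForm F W) (hsymm : C.IsSymm) (hC : C ≠ 0) :
    {p : ℙ F W | C p.rep p.rep = 0}.ncard ≤ 2 := by
  by_contra! h
  obtain ⟨p₁, hp₁, p₂, hp₂, p₃, hp₃, h₁₂, h₁₃, h₂₃⟩ :=
    (Set.two_lt_ncard (Set.finite_of_ncard_pos (by omega))).mp h
  have := invertibleOfNonzero h2
  obtain ⟨w, hw⟩ := exists_bilinForm_self_ne_zero hC (isSymm_iff.mp hsymm)
  exact hw (C.self_eq_zero_of_three_isotropic_points hW h₁₂ h₁₃ h₂₃ hp₁ hp₂ hp₃ w)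

end Plane

/-- On the diagonal, `B.gramForm a u u` is the Gram determinant of `a, u`. -/
def gramForm (B : BilinForm F V) (a : V) : BilinForm F V :=
  B a a • B - linMulLin (B a) (B a)

@[simp]
lemma gramForm_apply (B : BilinForm F V) (a u v : V) :
    B.gramForm a u v = B a a * B u v - B a u * B a v := by
  simp [gramForm]

lemma IsSymm.gramForm {B : BilinForm F V} (hB : B.IsSymm) (a : V) : (B.gramForm a).IsSymm :=
  ⟨fun u v => by simp only [gramForm_apply, hB.eq u v]; ring⟩

lemma gramForm_restrict_ne_zero (B : BilinForm F V) {W : Submodule F V}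
    (hW : 1 < finrank F W) (hBW : (B.restrict W).Nondegenerate) {a : V} (ha : B a a ≠ 0) :
    (B.gramForm a).restrict W ≠ 0 := by
  intro h0
  have : FiniteDimensional F W := .of_finrank_pos (by omega)
  obtain ⟨u, hu, hu0⟩ := Submodule.exists_mem_ne_zero_of_ne_bot
    (LinearMap.ker_ne_bot_of_finrank_lt (f := (B a).domRestrict W) (by simpa using hW))
  refine hu0 (hBW.1 u fun v => ?_)
  have hau : B a u = 0 := hu
  have := LinearMap.congr_fun₂ h0 u v
  simp only [restrict_apply, LinearMap.domRestrict_apply, gramForm_apply, hau, zero_mul, sub_zero,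
    LinearMap.zero_apply] at this
  exact (mul_eq_zero.mp this).resolve_left ha

lemma nondegenerate_restrict_span_of_det_ne_zero {ι : Type*} [Fintype ι] [DecidableEq ι]
    (B : BilinForm F V) {v : ι → V} (hv : LinearIndependent F v)
    (hdet : (Matrix.of fun i j => B (v i) (v j)).det ≠ 0) :
    (B.restrict (Submodule.span F (Set.range v))).Nondegenerate := by
  rw [nondegenerate_iff_det_ne_zero (Basis.span hv)]
  convert hdet using 2
  ext i j
  simp [toMatrix_apply]

lemma nondegenerate_restrict_span_singleton (B : BilinForm F V) {u : V} (hu : B u u ≠ 0) :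
    (B.restrict (F ∙ u)).Nondegenerate := by
  have := B.nondegenerate_restrict_span_of_det_ne_zero (v := ![u])
    (linearIndependent_unique_iff.mpr (ne_zero_of_not_isOrtho_self u hu)) (by simpa using hu)
  rwa [Matrix.range_cons_empty] at this

lemma nondegenerate_restrict_span_pair {B : BilinForm F V} (hB : B.IsSymm) {a u : V}
    (hau : LinearIndependent F ![a, u]) (h : B.gramForm a u u ≠ 0) :
    (B.restrict (F ∙ a ⊔ F ∙ u)).Nondegenerate := by
  have := B.nondegenerate_restrict_span_of_det_ne_zero hau
    (by simpa [Matrix.det_fin_two, hB.eq u a] using h)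
  rwa [Matrix.range_cons_cons_empty, Submodule.span_insert] at this

lemma nondegenerate_point_and_line {B : BilinForm F V} (hB : B.IsSymm) {W : Submodule F V}
    {a u : V} (ha : a ∉ W) (hu : u ∈ W) (huu : B u u ≠ 0) (hgram : B.gramForm a u u ≠ 0) :
    (B.restrict (F ∙ u)).Nondegenerate ∧ finrank F (F ∙ a ⊔ F ∙ u : Submodule F V) = 2 ∧
      (B.restrict (F ∙ a ⊔ F ∙ u)).Nondegenerate :=
  have hau := W.linearIndependent_pair_of_notMem_of_mem ha hu (ne_zero_of_not_isOrtho_self u huu)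
  ⟨B.nondegenerate_restrict_span_singleton huu, hau.finrank_span_singleton_sup_span_singleton,
    nondegenerate_restrict_span_pair hB hau hgram⟩

end LinearMap.BilinForm

end

theorem point_line_at_least_q_sub_three_collinear
    {F V : Type*} [Field F] [Fintype F] [AddCommGroup V] [Module F V]
    (q : ℕ) (hq : Fintype.card F = q) (hodd : Odd q)
    (B : LinearMap.BilinForm F V) (hsymm : B.IsSymm)
    (l : Submodule F V) (hl2 : finrank F l = 2) (hl : (B.restrict l).Nondegenerate)
    (a : V) (ha : B a a ≠ 0) (hal : a ∉ l) :
    q - 3 ≤ Set.ncard {P : Submodule F V | P ≤ l ∧ finrank F P = 1 ∧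
      (B.restrict P).Nondegenerate ∧
      finrank F (Submodule.span F {a} ⊔ P : Submodule F V) = 2 ∧
      (B.restrict (Submodule.span F {a} ⊔ P)).Nondegenerate} := by
  have h2 : (2 : F) ≠ 0 := FiniteField.two_ne_zero_of_odd_card (hq ▸ hodd)
  have : Module.Finite F l := Module.finite_of_finrank_pos (by omega)
  have : Nontrivial l := Module.nontrivial_of_finrank_pos (R := F) (by omega)
  have : Finite l := Module.finite_of_finite F
  set bad : Set (ℙ F l) := {p | B.restrict l p.rep p.rep = 0} ∪
    {p | (B.gramForm a).restrict l p.rep p.rep = 0}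
  have hbad : bad.ncard ≤ 4 := (Set.ncard_union_le _ _).trans <| add_le_add
    ((B.restrict l).ncard_isotropic_points_le_two hl2 h2 (hsymm.restrict l) hl.ne_zero)
    (((B.gramForm a).restrict l).ncard_isotropic_points_le_two hl2 h2
      ((hsymm.gramForm a).restrict l) (B.gramForm_restrict_ne_zero (by omega) hl ha))
  have hcard : Nat.card (ℙ F l) = q + 1 := by
    rw [Projectivization.card_of_finrank_two F l hl2, Nat.card_eq_fintype_card, hq]
  have : Finite (ℙ F l) := Nat.finite_of_card_ne_zero (by omega)
  calc q - 3 ≤ badᶜ.ncard := by have := Set.ncard_add_ncard_compl bad; omega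
    _ = ((fun p : ℙ F l => F ∙ (p.rep : V)) '' badᶜ).ncard :=
      (Set.ncard_image_of_injective _ (Projectivization.span_rep_injective l)).symm
    _ ≤ _ := by
      refine Set.ncard_le_ncard ?_ (l.finite_Iic.subset fun _ hP => hP.1)
      rintro _ ⟨p, hp, rfl⟩
      simp only [bad, Set.mem_compl_iff, Set.mem_union, Set.mem_ofPred_eq, not_or] at hp
      exact ⟨(Submodule.span_singleton_le_iff_mem _ _).mpr p.rep.2,
        finrank_span_singleton (by simpa using p.rep_nonzero),
        LinearMap.BilinForm.nondegenerate_point_and_line hsymm hal p.rep.2 hp.1 hp.2⟩
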